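/- arXiv:2106.08986 — 6 statements merged into one kernel-verified Lean document; each statement's English description precedes it below -/
import Mathlib

section
/- Let q be a prime power, let 2 ≤ m ≤ k be integers, let L be an (m×k)-system over F_q and let B be a critical set for L. Then any two (m_B × c(L))-systems induced by L on B are equivalent; that is, the (m_B × c(L))-system induced by L on B is unique up to equivalence. -/
open Finset

section Defs

variable {F : Type} [Field F] [Fintype F] [DecidableEq F]

/-- The set of solutions to `L x = 0` with all coordinates in `A ⊆ F^n`. -/
def solSet {m k n : ℕ} (L : Matrix (Fin m) (Fin k) F) (A : Set (Fin n → F)) :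
    Set (Fin k → Fin n → F) :=
  {x | (∀ j, x j ∈ A) ∧ ∀ i, ∑ j, L i j • x j = 0}

/-- The finset of all solutions to `L x = 0` over `F^n`. -/
def solutions {m k : ℕ} (L : Matrix (Fin m) (Fin k) F) (n : ℕ) :
    Finset (Fin k → Fin n → F) :=
  Finset.univ.filter fun x => ∀ i, ∑ j, L i j • x j = 0

/-- `Λ_L(f)`, the density of solutions to `L = 0` with respect to `f`. -/
noncomputable def lambdaSol {m k n : ℕ} (L : Matrix (Fin m) (Fin k) F) (f : (Fin n → F) → ℝ) : ℝ :=
  (∑ x ∈ solutions L n, ∏ j, f (x j)) / (solutions L n).card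

/-- `Δ_L(f) = Λ_L(1/2 + f) + Λ_L(1/2 − f)`. -/
noncomputable def deltaSol {m k n : ℕ} (L : Matrix (Fin m) (Fin k) F) (f : (Fin n → F) → ℝ) : ℝ :=
  lambdaSol L (fun y => 1 / 2 + f y) + lambdaSol L (fun y => 1 / 2 - f y)

/-- `L` is common: for every `n ≥ 1` and every `f : F^n → [-1/2,1/2]`,
`Δ_L(f) ≥ 2^(1-k)`. -/
def IsCommon {m k : ℕ} (L : Matrix (Fin m) (Fin k) F) : Prop :=
  ∀ n : ℕ, 1 ≤ n → ∀ f : (Fin n → F) → ℝ,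
    (∀ y, f y ∈ Set.Icc (-(1 / 2) : ℝ) (1 / 2)) →
    (2 : ℝ) ^ (1 - (k : ℤ)) ≤ deltaSol L f

/-- The rows of the coefficient matrix `L` are linearly independent. -/
def RowsIndep {m k : ℕ} (L : Matrix (Fin m) (Fin k) F) : Prop :=
  LinearIndependent F fun i => fun j => L i j

/-- `L` induces the `ℓ`-variable system `L'` on the set `B` (with `B` listed in
increasing order). -/
def InducesOn {m k m' ℓ : ℕ} (L : Matrix (Fin m) (Fin k) F)
    (L' : Matrix (Fin m') (Fin ℓ) F) (B : Finset (Fin k)) (hB : B.card = ℓ) : Prop :=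
  ∀ x : Fin k → F, (∀ i, ∑ j, L i j * x j = 0) →
    ∀ r, ∑ t, L' r t * x (B.orderIsoOfFin hB t).1 = 0

/-- `L` is irredundant: it does not induce the equation `x i − x j = 0` for any `i ≠ j`. -/
def IsIrredundant {m k : ℕ} (L : Matrix (Fin m) (Fin k) F) : Prop :=
  ¬ ∃ i j : Fin k, i ≠ j ∧
    ∀ x : Fin k → F, (∀ r, ∑ t, L r t * x t = 0) → x i = x j

/-- `c` is a (single) linear equation induced by `L`. -/
def InducedEq {m k : ℕ} (L : Matrix (Fin m) (Fin k) F) (c : Fin k → F) : Prop :=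
  ∀ x : Fin k → F, (∀ i, ∑ j, L i j * x j = 0) → ∑ j, c j * x j = 0

/-- Length of an equation: the number of variables with nonzero coefficient. -/
def eqLength {k : ℕ} (c : Fin k → F) : ℕ := (Finset.univ.filter fun j => c j ≠ 0).card

/-- `s(L)`: the minimal length of a nonzero equation induced by `L`. -/
noncomputable def sMin {m k : ℕ} (L : Matrix (Fin m) (Fin k) F) : ℕ :=
  sInf {s | ∃ c : Fin k → F, c ≠ 0 ∧ InducedEq L c ∧ eqLength c = s}

/-- `c(L)`: `s(L)` rounded up to the nearest even number. -/
noncomputable def cEven {m k : ℕ} (L : Matrix (Fin m) (Fin k) F) : ℕ :=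
  if Even (sMin L) then sMin L else sMin L + 1

/-- `B` is a critical set for `L`: `|B| = c(L)` and `L` induces some system on `B`. -/
def IsCriticalSet {m k : ℕ} (L : Matrix (Fin m) (Fin k) F) (B : Finset (Fin k)) : Prop :=
  B.card = cEven L ∧ ∃ (m' : ℕ) (L' : Matrix (Fin m') (Fin B.card) F),
    1 ≤ m' ∧ RowsIndep L' ∧ InducesOn L L' B rfl

/-- `m_B`: the maximal `m'` such that `L` induces an `(m' × |B|)`-system on `B`. -/
noncomputable def mMax {m k : ℕ} (L : Matrix (Fin m) (Fin k) F) (B : Finset (Fin k)) : ℕ :=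
  sSup {m' | ∃ L' : Matrix (Fin m') (Fin B.card) F, RowsIndep L' ∧ InducesOn L L' B rfl}

/-- `Φ_L(B, f)`. -/
noncomputable def Phi {m k n : ℕ} (L : Matrix (Fin m) (Fin k) F) (B : Finset (Fin k))
    (f : (Fin n → F) → ℝ) : ℝ :=
  (∑ x ∈ solutions L n, ∏ j ∈ B, f (x j)) / (solutions L n).card

/-- `B` is rank-reducing for `L`: deleting the columns indexed by `B` decreases the rank. -/
def RankReducing {m k : ℕ} (L : Matrix (Fin m) (Fin k) F) (B : Finset (Fin k)) : Prop :=
  (L.submatrix id fun j : {j : Fin k // j ∉ B} => (j : Fin k)).rank < L.rank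

end Defs

/-- the `(m_B × c(L))`-system induced by `L` on a critical set `B` is
unique up to equivalence. -/
theorem critical_system_unique_up_to_equivalence
    {F : Type} [Field F] [Fintype F] [DecidableEq F]
    {m k : ℕ} (hm : 2 ≤ m) (hmk : m ≤ k)
    (L : Matrix (Fin m) (Fin k) F) (hL : RowsIndep L)
    (B : Finset (Fin k)) (hB : IsCriticalSet L B)
    (L₁ L₂ : Matrix (Fin (mMax L B)) (Fin B.card) F)
    (h₁ : RowsIndep L₁) (h₁' : InducesOn L L₁ B rfl)
    (h₂ : RowsIndep L₂) (h₂' : InducesOn L L₂ B rfl) :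
    (∀ x : Fin B.card → F,
      (∀ i, ∑ j, L₁ i j * x j = 0) → ∀ i, ∑ j, L₂ i j * x j = 0) ∧
    (∀ x : Fin B.card → F,
      (∀ i, ∑ j, L₂ i j * x j = 0) → ∀ i, ∑ j, L₁ i j * x j = 0) := by
  classical
  -- property of being an induced equation on B
  set P : (Fin B.card → F) → Prop := fun c => ∀ x : Fin k → F,
      (∀ i, ∑ j, L i j * x j = 0) → ∑ t, c t * x (B.orderIsoOfFin rfl t).1 = 0 with hPdef
  have hbdd : BddAbove {m' | ∃ L' : Matrix (Fin m') (Fin B.card) F,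
      RowsIndep L' ∧ InducesOn L L' B rfl} := by
    refine ⟨B.card, fun m' hm' => ?_⟩
    obtain ⟨L', hind, -⟩ := hm'
    have h1 := hind.fintype_card_le_finrank
    simpa using h1
  have key : ∀ (A : Matrix (Fin (mMax L B)) (Fin B.card) F), RowsIndep A →
      InducesOn L A B rfl → ∀ c, P c →
      c ∈ Submodule.span F (Set.range fun r => fun j => A r j) := by
    intro A hA hA' c hPc
    by_contra hcnot
    set A' : Matrix (Fin (mMax L B + 1)) (Fin B.card) F :=
      (Fin.cons c (fun r => fun j => A r j) : Fin (mMax L B + 1) → Fin B.card → F) with hA'def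
    have hindep : RowsIndep A' := by
      have : LinearIndependent F (Fin.cons c (fun r => fun j => A r j) :
          Fin (mMax L B + 1) → Fin B.card → F) := by
        rw [linearIndependent_fin_cons]
        exact ⟨hA, hcnot⟩
      exact this
    have hinduces : InducesOn L A' B rfl := by
      intro x hx r
      refine Fin.cases ?_ ?_ r
      · simpa [hA'def] using hPc x hx
      · intro r'
        simpa [hA'def] using hA' x hx r'
    have hmem : mMax L B + 1 ∈ {m' | ∃ L' : Matrix (Fin m') (Fin B.card) F,
        RowsIndep L' ∧ InducesOn L L' B rfl} := ⟨A', hindep, hinduces⟩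
    have := le_csSup hbdd hmem
    rw [show sSup {m' | ∃ L' : Matrix (Fin m') (Fin B.card) F,
        RowsIndep L' ∧ InducesOn L L' B rfl} = mMax L B from rfl] at this
    omega
  have main : ∀ (A C : Matrix (Fin (mMax L B)) (Fin B.card) F), RowsIndep A →
      InducesOn L A B rfl → InducesOn L C B rfl → ∀ x : Fin B.card → F,
      (∀ i, ∑ j, A i j * x j = 0) → ∀ i, ∑ j, C i j * x j = 0 := by
    intro A C hA hA' hC' x hx i
    have hPc : P (fun j => C i j) := fun y hy => hC' y hy i
    have hc : (fun j => C i j) ∈ Submodule.span F (Set.range fun r => fun j => A r j) :=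
      key A hA hA' _ hPc
    let φ : (Fin B.card → F) →ₗ[F] F :=
      { toFun := fun c => ∑ j, c j * x j
        map_add' := by intro a b; simp [add_mul, Finset.sum_add_distrib]
        map_smul' := by intro r a; simp [Finset.mul_sum, mul_assoc]
      }
    have hker : (Set.range fun r => fun j => A r j) ⊆ (LinearMap.ker φ : Set (Fin B.card → F)) := by
      rintro v ⟨r, rfl⟩
      simpa [φ, LinearMap.mem_ker] using hx r
    have hspan : Submodule.span F (Set.range fun r => fun j => A r j) ≤ LinearMap.ker φ :=
      Submodule.span_le.2 hker
    have : φ (fun j => C i j) = 0 := hspan hc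
    simpa [φ] using this
  exact ⟨main L₁ L₂ h₁ h₁' h₂', main L₂ L₁ h₂ h₂' h₁'⟩
end

section
/- Let q be a prime power, let 2 ≤ m ≤ k be integers, let L be an (m×k)-system over F_q and let B be a critical set for L. If s(L) is even, then m_B = 1. -/
open Finset

section Aux

variable {F : Type} [Field F] [Fintype F] [DecidableEq F]

lemma aux_short_eq {m k : ℕ} (L : Matrix (Fin m) (Fin k) F) (B : Finset (Fin k))
    (hBs : B.card = sMin L)
    (a : Fin B.card → F) (ha : a ≠ 0)
    (hind : ∀ x : Fin k → F, (∀ i, ∑ j, L i j * x j = 0) →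
      ∑ t, a t * x (B.orderIsoOfFin rfl t).1 = 0)
    (t0 : Fin B.card) (h0 : a t0 = 0) : False := by
  classical
  set e := B.orderIsoOfFin rfl with he
  set c : Fin k → F := fun j => if h : j ∈ B then a (e.symm ⟨j, h⟩) else 0 with hc
  have hcap : ∀ t : Fin B.card, c ((e t).1) = a t := by
    intro t
    have hmem := (e t).2
    simp only [hc, dif_pos hmem, Subtype.coe_eta, OrderIso.symm_apply_apply]
  have hcoff : ∀ j : Fin k, j ∉ B → c j = 0 := by
    intro j hj; simp [hc, dif_neg hj]
  -- c is an induced equation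
  have hcind : InducedEq L c := by
    intro x hx
    have h1 := hind x hx
    have h2 : ∑ j, c j * x j = ∑ j ∈ B, c j * x j := by
      refine (Finset.sum_subset (Finset.subset_univ B) ?_).symm
      intro j _ hj
      simp [hcoff j hj]
    have h3 : ∑ j ∈ B, c j * x j = ∑ b : B, c b.1 * x b.1 :=
      (Finset.sum_coe_sort B (fun j => c j * x j)).symm
    have h4 : ∑ b : B, c b.1 * x b.1 = ∑ t : Fin B.card, c ((e t).1) * x ((e t).1) :=
      (e.toEquiv.sum_comp (fun b : B => c b.1 * x b.1)).symm
    rw [h2, h3, h4]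
    calc ∑ t : Fin B.card, c ((e t).1) * x ((e t).1)
        = ∑ t : Fin B.card, a t * x ((e t).1) := by
          refine Finset.sum_congr rfl fun t _ => by rw [hcap t]
      _ = 0 := h1
  -- c is nonzero
  obtain ⟨t1, ht1⟩ := Function.ne_iff.mp ha
  have hc0 : c ≠ 0 := by
    intro hz
    apply ht1
    have := congrFun hz ((e t1).1)
    rwa [hcap t1] at this
  -- so sMin L ≤ eqLength c
  have hmem : eqLength c ∈ {s | ∃ c' : Fin k → F, c' ≠ 0 ∧ InducedEq L c' ∧ eqLength c' = s} :=
    ⟨c, hc0, hcind, rfl⟩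
  have hle : sMin L ≤ eqLength c := Nat.sInf_le hmem
  -- but eqLength c < B.card
  have hsub : (Finset.univ.filter fun j => c j ≠ 0) ⊆ B.erase ((e t0).1) := by
    intro j hj
    simp only [Finset.mem_filter] at hj
    have hjB : j ∈ B := by
      by_contra hjB
      exact hj.2 (hcoff j hjB)
    refine Finset.mem_erase.mpr ⟨?_, hjB⟩
    intro hjeq
    apply hj.2
    rw [hjeq, hcap t0, h0]
  have hlt : eqLength c ≤ B.card - 1 := by
    have := Finset.card_le_card hsub
    rwa [Finset.card_erase_of_mem (e t0).2] at this
  have hpos : 1 ≤ B.card := t0.2.trans_le (le_refl _) |>.le.trans (le_refl _) |> fun _ => Nat.one_le_iff_ne_zero.mpr (by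
    intro h
    exact absurd t0.2 (by omega))
  omega

end Aux

/-- if `s(L)` is even, then `m_B = 1` for every critical set `B`. -/
theorem mMax_eq_one_of_even
    {F : Type} [Field F] [Fintype F] [DecidableEq F]
    {m k : ℕ} (hm : 2 ≤ m) (hmk : m ≤ k)
    (L : Matrix (Fin m) (Fin k) F) (hL : RowsIndep L)
    (B : Finset (Fin k)) (hB : IsCriticalSet L B)
    (hs : Even (sMin L)) :
    mMax L B = 1 := by
  classical
  obtain ⟨hBcard, m', L', hm'1, hLi, hLo⟩ := hB
  have hcE : cEven L = sMin L := if_pos hs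
  have hBs : B.card = sMin L := hBcard.trans hcE
  -- sMin L ≥ 1
  have hSne : {s | ∃ c : Fin k → F, c ≠ 0 ∧ InducedEq L c ∧ eqLength c = s}.Nonempty := by
    refine ⟨eqLength (L ⟨0, by omega⟩), L ⟨0, by omega⟩, ?_, ?_, rfl⟩
    · exact hL.ne_zero ⟨0, by omega⟩
    · intro x hx; exact hx ⟨0, by omega⟩
  have hsmem := Nat.sInf_mem hSne
  obtain ⟨c0, hc0ne, _, hc0len'⟩ := hsmem
  have hc0len : eqLength c0 = sMin L := hc0len'
  have hspos : 1 ≤ sMin L := by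
    rcases Nat.eq_zero_or_pos (sMin L) with h | h
    · exfalso
      rw [h] at hc0len
      apply hc0ne
      have hcard : (Finset.univ.filter fun j => c0 j ≠ 0) = ∅ := Finset.card_eq_zero.mp hc0len
      funext j
      show c0 j = 0
      by_contra hj
      have hjm : j ∈ (∅ : Finset (Fin k)) :=
        hcard ▸ Finset.mem_filter.mpr ⟨Finset.mem_univ j, hj⟩
      exact absurd hjm (Finset.notMem_empty j)
    · exact h
  have hcardpos : 1 ≤ B.card := by omega
  -- the set whose sSup is mMax
  set S := {m'' | ∃ L'' : Matrix (Fin m'') (Fin B.card) F, RowsIndep L'' ∧ InducesOn L L'' B rfl}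
    with hS
  have h1mem : 1 ∈ S := by
    refine ⟨fun _ t => L' ⟨0, hm'1⟩ t, ?_, ?_⟩
    · exact linearIndependent_unique_iff.mpr (hLi.ne_zero ⟨0, hm'1⟩)
    · intro x hx r; exact hLo x hx ⟨0, hm'1⟩
  have hub : ∀ n ∈ S, n ≤ 1 := by
    intro m'' hm''
    by_contra hgt
    push_neg at hgt
    obtain ⟨L'', hi, ho⟩ := hm''
    have h2 : 2 ≤ m'' := hgt
    set i0 : Fin m'' := ⟨0, by omega⟩
    set i1 : Fin m'' := ⟨1, by omega⟩
    set t0 : Fin B.card := ⟨0, by omega⟩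
    set v0 : Fin B.card → F := fun t => L'' i0 t with hv0
    set v1 : Fin B.card → F := fun t => L'' i1 t with hv1
    -- pair linear independence
    have hinj : Function.Injective (![i1, i0] : Fin 2 → Fin m'') := by
      intro a b hab
      fin_cases a <;> fin_cases b <;> simp_all [i0, i1] <;> omega
    have hpair : LinearIndependent F ((fun i => fun j => L'' i j) ∘ ![i1, i0]) :=
      hi.comp _ hinj
    have heq : ((fun i => fun j => L'' i j) ∘ ![i1, i0]) = ![v1, v0] := by
      funext b
      fin_cases b <;> rfl
    rw [heq] at hpair
    obtain ⟨hv0ne', hnc'⟩ := linearIndependent_fin2.mp hpair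
    have hv0ne : v0 ≠ 0 := by simpa using hv0ne'
    have hnc : ∀ d : F, d • v0 ≠ v1 := by
      intro d
      have := hnc' d
      simpa using this
    by_cases hz : v0 t0 = 0
    · exact aux_short_eq L B hBs v0 hv0ne (fun x hx => ho x hx i0) t0 hz
    · set d : F := v1 t0 / v0 t0 with hd
      set a : Fin B.card → F := fun t => v1 t - d * v0 t with haeq
      have ha0 : a t0 = 0 := by
        simp only [haeq, hd]
        field_simp
        ring
      have hane : a ≠ 0 := by
        intro hz2
        apply hnc d
        funext t
        have := congrFun hz2 t
        simp only [haeq, Pi.zero_apply] at this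
        simp only [Pi.smul_apply, smul_eq_mul]
        linear_combination -this
      have haind : ∀ x : Fin k → F, (∀ i, ∑ j, L i j * x j = 0) →
          ∑ t, a t * x (B.orderIsoOfFin rfl t).1 = 0 := by
        intro x hx
        have h1 := ho x hx i1
        have h0' := ho x hx i0
        have : ∑ t, a t * x (B.orderIsoOfFin rfl t).1 =
            (∑ t, v1 t * x (B.orderIsoOfFin rfl t).1)
              - d * ∑ t, v0 t * x (B.orderIsoOfFin rfl t).1 := by
          rw [Finset.mul_sum, ← Finset.sum_sub_distrib]
          refine Finset.sum_congr rfl fun t _ => by ring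
        rw [this, h1, h0']
        ring
      exact aux_short_eq L B hBs a hane haind t0 ha0
  show sSup S = 1
  exact le_antisymm (csSup_le ⟨1, h1mem⟩ hub) (le_csSup ⟨1, hub⟩ h1mem)
end

section
/- Let q be a prime power, let 2 ≤ m ≤ k be integers, let L be an (m×k)-system over F_q and let B be a critical set for L. If s(L) is odd, then m_B ∈ {1, 2}. -/
open Finset

/-- if `s(L)` is odd, then `m_B ∈ {1, 2}` for every critical set `B`. -/
theorem mMax_mem_of_odd
    {F : Type} [Field F] [Fintype F] [DecidableEq F]
    {m k : ℕ} (hm : 2 ≤ m) (hmk : m ≤ k)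
    (L : Matrix (Fin m) (Fin k) F) (hL : RowsIndep L)
    (B : Finset (Fin k)) (hB : IsCriticalSet L B)
    (hs : Odd (sMin L)) :
    mMax L B = 1 ∨ mMax L B = 2 := by
  classical
  obtain ⟨hBc, m₀, L₀, hm₀, hL₀i, hL₀⟩ := hB
  have hs1 : 1 ≤ sMin L := hs.pos
  have hcard : B.card = sMin L + 1 := by
    rw [hBc, cEven, if_neg (by rw [Nat.even_iff]; rw [Nat.odd_iff] at hs; omega)]
  -- Key lemma: any nonzero induced equation supported on B has at least sMin L
  -- nonzero coefficients.
  have key : ∀ (c' : Fin B.card → F), c' ≠ 0 →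
      (∀ x : Fin k → F, (∀ i, ∑ j, L i j * x j = 0) →
        ∑ t, c' t * x (B.orderIsoOfFin rfl t).1 = 0) →
      sMin L ≤ (Finset.univ.filter fun t => c' t ≠ 0).card := by
    intro c' hc' hind
    set e := B.orderIsoOfFin rfl with he
    set c : Fin k → F := fun j => if h : j ∈ B then c' (e.symm ⟨j, h⟩) else 0 with hc
    have hce : ∀ t, c ((e t : Fin k)) = c' t := by
      intro t
      simp [hc, (e t).2]
    have hsum : ∀ x : Fin k → F, ∑ j, c j * x j = ∑ t, c' t * x (e t).1 := by
      intro x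
      have h1 : ∑ j, c j * x j = ∑ j ∈ B, c j * x j := by
        refine (Finset.sum_subset (Finset.subset_univ B) ?_).symm
        intro j _ hj
        simp [hc, hj]
      rw [h1, ← Finset.sum_coe_sort B (fun j => c j * x j),
        ← Equiv.sum_comp e.toEquiv (fun j : B => c (j : Fin k) * x (j : Fin k))]
      refine Finset.sum_congr rfl fun t _ => ?_
      show c (e t : Fin k) * x (e t : Fin k) = _
      rw [hce]
    have hc0 : c ≠ 0 := by
      obtain ⟨t, ht⟩ := Function.ne_iff.mp hc'
      intro h
      exact ht (by rw [← hce t, h]; rfl)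
    have hIE : InducedEq L c := by
      intro x hx
      rw [hsum]
      exact hind x hx
    have hlen : (Finset.univ.filter fun t => c' t ≠ 0).card = eqLength c := by
      rw [eqLength]
      refine Finset.card_bij (fun t _ => (e t : Fin k)) ?_ ?_ ?_
      · intro t ht
        simp only [Finset.mem_filter, Finset.mem_univ, true_and] at ht ⊢
        rw [hce]; exact ht
      · intro t1 _ t2 _ h
        have : e t1 = e t2 := Subtype.ext h
        exact e.injective this
      · intro j hj
        simp only [Finset.mem_filter, Finset.mem_univ, true_and] at hj
        have hjB : j ∈ B := by
          by_contra hjB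
          exact hj (by simp [hc, hjB])
        refine ⟨e.symm ⟨j, hjB⟩, ?_, by simp⟩
        simp only [Finset.mem_filter, Finset.mem_univ, true_and]
        rw [← hce (e.symm ⟨j, hjB⟩)]
        simpa using hj
    rw [hlen]
    exact Nat.sInf_le ⟨c, hc0, hIE, rfl⟩
  -- Upper bound: every induced independent system on B has at most 2 rows.
  have hub : ∀ m' : ℕ,
      (∃ L' : Matrix (Fin m') (Fin B.card) F, RowsIndep L' ∧ InducesOn L L' B rfl) →
      m' ≤ 2 := by
    rintro m' ⟨L', hLi, hLo⟩
    by_contra hgt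
    push_neg at hgt
    have h2 : 2 ≤ B.card := by omega
    set t1 : Fin B.card := ⟨0, by omega⟩ with ht1d
    set t2 : Fin B.card := ⟨1, by omega⟩ with ht2d
    have ht12 : t1 ≠ t2 := by simp [ht1d, ht2d, Fin.ext_iff]
    let ψ : (Fin m' → F) →ₗ[F] (Fin 2 → F) :=
      { toFun := fun a i => ∑ r, a r * L' r (if i = 0 then t1 else t2)
        map_add' := by
          intro a b; funext i; simp [add_mul, Finset.sum_add_distrib]
        map_smul' := by
          intro cc a; funext i; simp [Finset.mul_sum, mul_assoc] }
    have hninj : ¬ Function.Injective ψ := by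
      intro hinj
      have hfr := LinearMap.finrank_le_finrank_of_injective hinj
      rw [Module.finrank_pi, Module.finrank_pi] at hfr
      simp [Fintype.card_fin] at hfr
      omega
    rw [injective_iff_map_eq_zero] at hninj
    push_neg at hninj
    obtain ⟨a, ha0, hane⟩ := hninj
    set v : Fin B.card → F := fun t => ∑ r, a r * L' r t with hv
    have hv1 : v t1 = 0 := by
      have := congrFun ha0 0
      simpa [ψ] using this
    have hv2 : v t2 = 0 := by
      have := congrFun ha0 1
      simpa [ψ] using this
    have hvne : v ≠ 0 := by
      intro h
      apply hane
      have hcomb : ∑ r, a r • (fun t => L' r t) = (0 : Fin B.card → F) := by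
        funext t
        have := congrFun h t
        simpa [hv, Finset.sum_apply, smul_eq_mul] using this
      have := Fintype.linearIndependent_iff.mp hLi a hcomb
      funext r
      exact this r
    have hvind : ∀ x : Fin k → F, (∀ i, ∑ j, L i j * x j = 0) →
        ∑ t, v t * x (B.orderIsoOfFin rfl t).1 = 0 := by
      intro x hx
      have hswap : ∑ t, v t * x (B.orderIsoOfFin rfl t).1 =
          ∑ r, a r * ∑ t, L' r t * x (B.orderIsoOfFin rfl t).1 := by
        simp_rw [hv, Finset.sum_mul, Finset.mul_sum, mul_assoc]
        rw [Finset.sum_comm]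
      rw [hswap]
      refine Finset.sum_eq_zero fun r _ => ?_
      rw [hLo x hx r, mul_zero]
    have hsub : (Finset.univ.filter fun t => v t ≠ 0) ⊆
        Finset.univ \ {t1, t2} := by
      intro t ht
      simp only [Finset.mem_filter, Finset.mem_univ, true_and] at ht
      simp only [Finset.mem_sdiff, Finset.mem_insert, Finset.mem_singleton]
      refine ⟨Finset.mem_univ _, ?_⟩
      rintro (rfl | rfl)
      · exact ht hv1
      · exact ht hv2
    have hle := Finset.card_le_card hsub
    rw [Finset.card_sdiff_of_subset (Finset.subset_univ _)] at hle
    have hc2 : ({t1, t2} : Finset (Fin B.card)).card = 2 := by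
      rw [Finset.card_insert_of_notMem (by simpa using ht12), Finset.card_singleton]
    rw [hc2, Finset.card_univ, Fintype.card_fin] at hle
    have hkey := key v hvne hvind
    omega
  -- Conclude.
  have hS1 : m₀ ∈ {m' | ∃ L' : Matrix (Fin m') (Fin B.card) F,
      RowsIndep L' ∧ InducesOn L L' B rfl} := ⟨L₀, hL₀i, hL₀⟩
  have hbdd : BddAbove {m' | ∃ L' : Matrix (Fin m') (Fin B.card) F,
      RowsIndep L' ∧ InducesOn L L' B rfl} := ⟨2, fun m' hm' => hub m' hm'⟩
  have hge : m₀ ≤ mMax L B := le_csSup hbdd hS1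
  have hle2 : mMax L B ≤ 2 := csSup_le ⟨m₀, hS1⟩ fun m' hm' => hub m' hm'
  omega
end

section
/- Let q be a prime power, let 2 ≤ m < k be integers, and let L be an (m×k)-system over F_q. If there exist n ≥ 1 and a balanced function f : F_q^n → [−1/2, 1/2] such that Σ_{B ∈ 𝒞(L)} Λ_{L_B}(f) < 0, then L is uncommon. -/
open Finset

section Helpers
set_option linter.unusedSectionVars false

open Module

variable {F : Type} [Field F] [Fintype F] [DecidableEq F]

/-- Coefficient-vector form of a dual functional on `Fin d → F`. -/
noncomputable def dualToVec (F : Type) [Field F] (d : ℕ) :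
    Module.Dual F (Fin d → F) ≃ₗ[F] (Fin d → F) :=
  (Pi.basisFun F (Fin d)).dualBasis.equivFun

lemma dualToVec_apply {d : ℕ} (φ : Module.Dual F (Fin d → F)) (t : Fin d) :
    dualToVec F d φ t = φ (Pi.basisFun F (Fin d) t) := by
  simp [dualToVec, Basis.equivFun_apply]

lemma dual_pairing {d : ℕ} (φ : Module.Dual F (Fin d → F)) (w : Fin d → F) :
    φ w = ∑ t, dualToVec F d φ t * w t := by
  conv_lhs => rw [← (Pi.basisFun F (Fin d)).sum_repr w]
  rw [map_sum]
  refine Finset.sum_congr rfl fun t _ => ?_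
  rw [map_smul, dualToVec_apply, Pi.basisFun_repr, smul_eq_mul, mul_comm]

/-- The annihilator of `W ≤ F^d` realized as a space of coefficient vectors. -/
noncomputable def annVec {d : ℕ} (W : Submodule F (Fin d → F)) : Submodule F (Fin d → F) :=
  W.dualAnnihilator.map (dualToVec F d).toLinearMap

lemma mem_annVec {d : ℕ} {W : Submodule F (Fin d → F)} {c : Fin d → F} :
    c ∈ annVec W ↔ ∀ w ∈ W, ∑ t, c t * w t = 0 := by
  constructor
  · rintro ⟨φ, hφ, rfl⟩ w hw
    simp only [LinearEquiv.coe_coe]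
    rw [← dual_pairing]
    exact (Submodule.mem_dualAnnihilator φ).1 (SetLike.mem_coe.mp hφ) w hw
  · intro h
    refine ⟨(dualToVec F d).symm c, SetLike.mem_coe.mpr ?_, by simp⟩
    rw [Submodule.mem_dualAnnihilator]
    intro w hw
    rw [dual_pairing ((dualToVec F d).symm c) w]
    simpa using h w hw

lemma finrank_add_finrank_annVec {d : ℕ} (W : Submodule F (Fin d → F)) :
    finrank F W + finrank F (annVec W) = d := by
  have h : Module.finrank F ((Fin d → F) ⧸ W) = Module.finrank F W.dualAnnihilator :=
    (Subspace.quotEquivAnnihilator W).finrank_eq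
  have h2 : finrank F (annVec W) = finrank F W.dualAnnihilator :=
    LinearEquiv.finrank_map_eq _ _
  rw [h2, ← h, add_comm, Submodule.finrank_quotient_add_finrank]
  simp

variable {m k : ℕ} (L : Matrix (Fin m) (Fin k) F) (S : Finset (Fin k))

lemma sum_S {α : Type*} [AddCommMonoid α] (g : Fin k → α) :
    ∑ j ∈ S, g j = ∑ t : Fin S.card, g (S.orderIsoOfFin rfl t) := by
  rw [← Finset.sum_coe_sort S g]
  exact Fintype.sum_equiv (S.orderIsoOfFin rfl).toEquiv.symm _ _ (by simp)

lemma prod_S {α : Type*} [CommMonoid α] (g : Fin k → α) :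
    ∏ j ∈ S, g j = ∏ t : Fin S.card, g (S.orderIsoOfFin rfl t) := by
  rw [← Finset.prod_coe_sort S g]
  exact Fintype.prod_equiv (S.orderIsoOfFin rfl).toEquiv.symm _ _ (by simp)

/-- Projection onto the coordinates of `S` (scalar level). -/
noncomputable def projS : (Fin k → F) →ₗ[F] (Fin S.card → F) :=
  LinearMap.funLeft F F (fun t => ((S.orderIsoOfFin rfl t : S) : Fin k))

lemma projS_apply (x : Fin k → F) (t : Fin S.card) :
    projS S x t = x (S.orderIsoOfFin rfl t) := rfl

/-- The projection of the scalar solution space of `L` to the coordinates of `S`. -/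
noncomputable def Wproj : Submodule F (Fin S.card → F) :=
  (LinearMap.ker L.mulVecLin).map (projS S)

lemma mem_kerL (x : Fin k → F) :
    x ∈ LinearMap.ker L.mulVecLin ↔ ∀ i, ∑ j, L i j * x j = 0 := by
  simp only [LinearMap.mem_ker, Matrix.mulVecLin_apply, Matrix.mulVec, dotProduct,
    funext_iff, Pi.zero_apply]

lemma annVec_pairing {c : Fin S.card → F} (hc : c ∈ annVec (Wproj L S))
    {x : Fin k → F} (hx : ∀ i, ∑ j, L i j * x j = 0) :
    ∑ t, c t * x (S.orderIsoOfFin rfl t) = 0 := by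
  have hxk : x ∈ LinearMap.ker L.mulVecLin := (mem_kerL L x).2 hx
  have := mem_annVec.1 hc (projS S x) ⟨x, hxk, rfl⟩
  simpa [projS_apply] using this

/-- If no nonzero induced equation is supported on `S`, the projection is everything. -/
lemma Wproj_eq_top
    (hno : ∀ c : Fin k → F, (∀ j, c j ≠ 0 → j ∈ S) → InducedEq L c → c = 0) :
    Wproj L S = ⊤ := by
  have hann : annVec (Wproj L S) = ⊥ := by
    rw [Submodule.eq_bot_iff]
    intro c hc
    set e := S.orderIsoOfFin rfl with he
    set cF : Fin k → F := fun j => if h : j ∈ S then c (e.symm ⟨j, h⟩) else 0 with hcF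
    have hsupp : ∀ j, cF j ≠ 0 → j ∈ S := by
      intro j hj
      by_contra h
      simp [hcF, h] at hj
    have hcFe : ∀ t, cF (e t) = c t := by
      intro t
      have h1 : ((e t : S) : Fin k) ∈ S := (e t).2
      simp only [hcF, dif_pos h1]
      congr 1
      have : (⟨((e t : S) : Fin k), h1⟩ : S) = e t := rfl
      rw [this, OrderIso.symm_apply_apply]
    have hind : InducedEq L cF := by
      intro x hx
      have h2 : ∑ j, cF j * x j = ∑ j ∈ S, cF j * x j := by
        refine (Finset.sum_subset (Finset.subset_univ S) ?_).symm
        intro j _ hj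
        have : cF j = 0 := by
          by_contra h
          exact hj (hsupp j h)
        simp [this]
      rw [h2, sum_S S (fun j => cF j * x j)]
      have h3 : ∑ t, cF (e t) * x (e t) = ∑ t, c t * x (e t) := by
        refine Finset.sum_congr rfl fun t _ => ?_
        rw [hcFe]
      rw [h3]
      exact annVec_pairing L S hc hx
    have h0 : cF = 0 := hno cF hsupp hind
    funext t
    have := congrFun h0 (e t)
    rw [hcFe] at this
    simpa using this
  have hfr := finrank_add_finrank_annVec (Wproj L S)
  rw [hann] at hfr
  simp only [finrank_bot, add_zero] at hfr
  apply Submodule.eq_top_of_finrank_eq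
  rw [hfr]
  simp

lemma mMax_bddAbove :
    BddAbove {m' | ∃ L' : Matrix (Fin m') (Fin S.card) F, RowsIndep L' ∧ InducesOn L L' S rfl} := by
  refine ⟨S.card, fun m' hm' => ?_⟩
  obtain ⟨L', hLI, -⟩ := hm'
  have := hLI.fintype_card_le_finrank (M := Fin S.card → F)
  simpa using this

lemma le_mMax {m' : ℕ} (L' : Matrix (Fin m') (Fin S.card) F)
    (h1 : RowsIndep L') (h2 : InducesOn L L' S rfl) : m' ≤ mMax L S := by
  exact le_csSup (mMax_bddAbove L S) ⟨L', h1, h2⟩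

/-- On a critical set, the projection of the solution space equals the kernel of the
induced system. -/
lemma Wproj_eq_ker (LB' : Matrix (Fin (mMax L S)) (Fin S.card) F)
    (hLI : RowsIndep LB') (hId : InducesOn L LB' S rfl) :
    Wproj L S = LinearMap.ker LB'.mulVecLin := by
  have hle : Wproj L S ≤ LinearMap.ker LB'.mulVecLin := by
    rintro w ⟨x, hx, rfl⟩
    rw [mem_kerL]
    intro r
    have := hId x (fun i => (mem_kerL L x).1 hx i) r
    simpa [projS_apply] using this
  -- rank of the induced system
  have hrange : finrank F (LinearMap.range LB'.mulVecLin) = mMax L S := by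
    have h1 : LB'.rank = Fintype.card (Fin (mMax L S)) :=
      LinearIndependent.rank_matrix (R := F) hLI
    simpa [Matrix.rank] using h1
  have hker : finrank F (LinearMap.ker LB'.mulVecLin) + mMax L S = S.card := by
    have := LinearMap.finrank_range_add_finrank_ker LB'.mulVecLin
    rw [hrange] at this
    rw [add_comm] at this
    simpa using this
  -- bound on the annihilator of the projection
  set N := annVec (Wproj L S) with hN
  have hNfd : FiniteDimensional F N := inferInstance
  have hNle : finrank F N ≤ mMax L S := by
    set b := Module.finBasis F N with hb
    set L'' : Matrix (Fin (finrank F N)) (Fin S.card) F := fun r t => (b r : Fin S.card → F) t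
      with hL''
    have h1 : RowsIndep L'' := by
      have := b.linearIndependent.map' N.subtype (Submodule.ker_subtype N)
      exact this
    have h2 : InducesOn L L'' S rfl := by
      intro x hx r
      exact annVec_pairing L S (b r).2 hx
    exact le_mMax L S L'' h1 h2
  have hW := finrank_add_finrank_annVec (Wproj L S)
  rw [← hN] at hW
  have hfr : finrank F (LinearMap.ker LB'.mulVecLin) ≤ finrank F (Wproj L S) := by omega
  exact Submodule.eq_of_le_of_finrank_le hle hfr

variable (n : ℕ)

/-- Projection onto coordinates of `S`, at the level of `F^n`-valued solutions. -/
def phiMap : (Fin k → Fin n → F) → (Fin S.card → Fin n → F) :=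
  fun x t => x (S.orderIsoOfFin rfl t)

lemma mem_solutions_iff (x : Fin k → Fin n → F) :
    x ∈ solutions L n ↔ ∀ t : Fin n, (fun j => x j t) ∈ LinearMap.ker L.mulVecLin := by
  simp only [solutions, Finset.mem_filter, Finset.mem_univ, true_and, mem_kerL,
    funext_iff, Finset.sum_apply, Pi.smul_apply, smul_eq_mul, Pi.zero_apply]
  exact forall_comm

lemma zero_mem_solutions : (0 : Fin k → Fin n → F) ∈ solutions L n := by
  simp [solutions]

lemma sub_mem_solutions {x x' : Fin k → Fin n → F}
    (hx : x ∈ solutions L n) (hx' : x' ∈ solutions L n) : x - x' ∈ solutions L n := by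
  simp only [solutions, Finset.mem_filter, Finset.mem_univ, true_and] at *
  intro i
  have : ∀ j, L i j • (x - x') j = L i j • x j - L i j • x' j := by
    intro j; simp [smul_sub]
  rw [Finset.sum_congr rfl fun j _ => this j, Finset.sum_sub_distrib, hx i, hx' i, sub_zero]

lemma add_mem_solutions {x x' : Fin k → Fin n → F}
    (hx : x ∈ solutions L n) (hx' : x' ∈ solutions L n) : x + x' ∈ solutions L n := by
  simp only [solutions, Finset.mem_filter, Finset.mem_univ, true_and] at *
  intro i
  have : ∀ j, L i j • (x + x') j = L i j • x j + L i j • x' j := by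
    intro j; simp [smul_add]
  rw [Finset.sum_congr rfl fun j _ => this j, Finset.sum_add_distrib, hx i, hx' i, add_zero]

lemma solutions_card_pos : 0 < (solutions L n).card :=
  Finset.card_pos.2 ⟨0, zero_mem_solutions L n⟩

lemma phiMap_sub (x x' : Fin k → Fin n → F) :
    phiMap S n (x - x') = phiMap S n x - phiMap S n x' := rfl

lemma phiMap_card_fiber {y : Fin S.card → Fin n → F}
    (hy : y ∈ (solutions L n).image (phiMap S n)) :
    ((solutions L n).filter fun x => phiMap S n x = y).card
      = ((solutions L n).filter fun x => phiMap S n x = 0).card := by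
  obtain ⟨x₀, hx₀, hx₀y⟩ := Finset.mem_image.1 hy
  refine Finset.card_bij' (fun x _ => x - x₀) (fun x _ => x + x₀) ?_ ?_ ?_ ?_
  · intro x hx
    simp only [Finset.mem_filter] at hx ⊢
    refine ⟨sub_mem_solutions L n hx.1 hx₀, ?_⟩
    rw [phiMap_sub, hx.2, hx₀y, sub_self]
  · intro x hx
    simp only [Finset.mem_filter] at hx ⊢
    refine ⟨add_mem_solutions L n hx.1 hx₀, ?_⟩
    have : phiMap S n (x + x₀) = phiMap S n x + phiMap S n x₀ := rfl
    rw [this, hx.2, hx₀y, zero_add]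
  · intro x _; funext j t; change x j t - x₀ j t + x₀ j t = x j t; ring
  · intro x _; funext j t; change x j t + x₀ j t - x₀ j t = x j t; ring

lemma sum_phiMap (g : (Fin S.card → Fin n → F) → ℝ) :
    ∑ x ∈ solutions L n, g (phiMap S n x)
      = ((solutions L n).filter fun x => phiMap S n x = 0).card
        * ∑ y ∈ (solutions L n).image (phiMap S n), g y := by
  rw [← Finset.sum_fiberwise_of_maps_to (g := phiMap S n)
    (fun x hx => Finset.mem_image_of_mem _ hx) (fun x => g (phiMap S n x))]
  rw [Finset.mul_sum]
  refine Finset.sum_congr rfl fun y hy => ?_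
  have : ∀ x ∈ (solutions L n).filter fun x => phiMap S n x = y,
      g (phiMap S n x) = g y := by
    intro x hx
    rw [(Finset.mem_filter.1 hx).2]
  rw [Finset.sum_congr rfl this, Finset.sum_const, nsmul_eq_mul, phiMap_card_fiber L S n hy]

lemma fiber_zero_card_pos :
    (0:ℝ) < ((solutions L n).filter fun x => phiMap S n x = 0).card := by
  have : (0 : Fin k → Fin n → F) ∈ (solutions L n).filter fun x => phiMap S n x = 0 := by
    refine Finset.mem_filter.2 ⟨zero_mem_solutions L n, rfl⟩
  exact_mod_cast Finset.card_pos.2 ⟨0, this⟩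

lemma mem_image_phiMap (y : Fin S.card → Fin n → F) :
    y ∈ (solutions L n).image (phiMap S n)
      ↔ ∀ t : Fin n, (fun s_ => y s_ t) ∈ Wproj L S := by
  constructor
  · rintro hy t
    obtain ⟨x, hx, rfl⟩ := Finset.mem_image.1 hy
    exact ⟨fun j => x j t, (mem_solutions_iff L n x).1 hx t, rfl⟩
  · intro h
    choose z hz hz2 using h
    refine Finset.mem_image.2 ⟨fun j t => z t j, ?_, ?_⟩
    · rw [mem_solutions_iff]
      intro t
      exact hz t
    · funext s_ t
      have := congrFun (hz2 t) s_
      exact this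

lemma image_phiMap_eq_univ
    (hno : ∀ c : Fin k → F, (∀ j, c j ≠ 0 → j ∈ S) → InducedEq L c → c = 0) :
    (solutions L n).image (phiMap S n) = Finset.univ := by
  ext y
  simp only [Finset.mem_univ, iff_true, mem_image_phiMap, Wproj_eq_top L S hno,
    Submodule.mem_top, implies_true]

lemma image_phiMap_eq_solutions (LB' : Matrix (Fin (mMax L S)) (Fin S.card) F)
    (hLI : RowsIndep LB') (hId : InducesOn L LB' S rfl) :
    (solutions L n).image (phiMap S n) = solutions LB' n := by
  ext y
  rw [mem_image_phiMap, Wproj_eq_ker L S LB' hLI hId, mem_solutions_iff LB' n y]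

lemma Phi_numerator (f : (Fin n → F) → ℝ) :
    ∑ x ∈ solutions L n, ∏ j ∈ S, f (x j)
      = ((solutions L n).filter fun x => phiMap S n x = 0).card
        * ∑ y ∈ (solutions L n).image (phiMap S n), ∏ t, f (y t) := by
  rw [← sum_phiMap L S n (fun y => ∏ t, f (y t))]
  refine Finset.sum_congr rfl fun x _ => ?_
  exact prod_S S (fun j => f (x j))

lemma solutions_card_eq (f : (Fin n → F) → ℝ) :
    ((solutions L n).card : ℝ)
      = ((solutions L n).filter fun x => phiMap S n x = 0).card
        * ((solutions L n).image (phiMap S n)).card := by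
  have := sum_phiMap L S n (fun _ => (1:ℝ))
  simpa using this

lemma Phi_eq_zero_of_no_eq (hS : S.Nonempty)
    (hno : ∀ c : Fin k → F, (∀ j, c j ≠ 0 → j ∈ S) → InducedEq L c → c = 0)
    (f : (Fin n → F) → ℝ) (hbal : ∑ y : Fin n → F, f y = 0) :
    Phi L S f = 0 := by
  rw [Phi, Phi_numerator L S n f, image_phiMap_eq_univ L S n hno]
  have h1 : ∑ y : Fin S.card → Fin n → F, ∏ t, f (y t)
      = ∏ _t : Fin S.card, ∑ v : Fin n → F, f v := by
    rw [Finset.prod_univ_sum]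
    rw [Fintype.piFinset_univ]
  rw [h1, hbal, Finset.prod_const, zero_pow, mul_zero, zero_div]
  simpa [Finset.card_eq_zero] using hS.ne_empty

lemma Phi_eq_lambda (LB' : Matrix (Fin (mMax L S)) (Fin S.card) F)
    (hLI : RowsIndep LB') (hId : InducesOn L LB' S rfl) (f : (Fin n → F) → ℝ) :
    Phi L S f = lambdaSol LB' f := by
  rw [Phi, Phi_numerator L S n f, image_phiMap_eq_solutions L S n LB' hLI hId, lambdaSol]
  have hcard := solutions_card_eq L S n f
  rw [image_phiMap_eq_solutions L S n LB' hLI hId] at hcard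
  rw [hcard]
  exact mul_div_mul_left _ _ (ne_of_gt (fiber_zero_card_pos L S n))

lemma Phi_abs_le (f : (Fin n → F) → ℝ) (hf : ∀ y, |f y| ≤ 1/2) :
    |Phi L S f| ≤ (1/2) ^ S.card := by
  rw [Phi, abs_div, Nat.abs_cast]
  rw [div_le_iff₀ (by exact_mod_cast solutions_card_pos L n)]
  calc |∑ x ∈ solutions L n, ∏ j ∈ S, f (x j)|
      ≤ ∑ x ∈ solutions L n, |∏ j ∈ S, f (x j)| := Finset.abs_sum_le_sum_abs _ _
    _ ≤ ∑ _x ∈ solutions L n, (1/2:ℝ) ^ S.card := by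
        refine Finset.sum_le_sum fun x _ => ?_
        rw [Finset.abs_prod]
        have : ∀ j ∈ S, |f (x j)| ≤ 1/2 := fun j _ => hf (x j)
        calc ∏ j ∈ S, |f (x j)| ≤ ∏ _j ∈ S, (1/2:ℝ) :=
              Finset.prod_le_prod (fun j _ => abs_nonneg _) this
          _ = (1/2)^S.card := by rw [Finset.prod_const]
    _ = (1/2)^S.card * (solutions L n).card := by
        rw [Finset.sum_const, nsmul_eq_mul, mul_comm]

lemma Phi_empty (f : (Fin n → F) → ℝ) : Phi L (∅ : Finset (Fin k)) f = 1 := by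
  have := solutions_card_pos L n
  rw [Phi]
  simp only [Finset.prod_empty, Finset.sum_const, nsmul_eq_mul, mul_one]
  rw [div_self]
  exact_mod_cast this.ne'

lemma lambdaSol_expand (a : ℝ) (f : (Fin n → F) → ℝ) :
    lambdaSol L (fun y => 1/2 + a * f y)
      = ∑ t ∈ (Finset.univ : Finset (Fin k)).powerset,
          a ^ t.card * (1/2)^(k - t.card) * Phi L t f := by
  rw [lambdaSol]
  have hx : ∀ x : Fin k → Fin n → F, ∏ j, (1/2 + a * f (x j))
      = ∑ t ∈ (Finset.univ : Finset (Fin k)).powerset,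
          a ^ t.card * (1/2)^(k - t.card) * ∏ j ∈ t, f (x j) := by
    intro x
    have h := Finset.prod_add (fun j => a * f (x j)) (fun _ => (1/2:ℝ)) Finset.univ
    have h2 : ∏ j, ((1:ℝ)/2 + a * f (x j)) = ∏ j, (a * f (x j) + 1/2) := by
      refine Finset.prod_congr rfl fun j _ => by ring
    rw [h2, h]
    refine Finset.sum_congr rfl fun t ht => ?_
    rw [Finset.prod_const, Finset.prod_mul_distrib, Finset.prod_const,
      Finset.card_sdiff_of_subset (Finset.mem_powerset.1 ht)]
    simp only [Finset.card_univ, Fintype.card_fin]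
    ring
  rw [Finset.sum_congr rfl (fun x _ => hx x), Finset.sum_comm, Finset.sum_div]
  refine Finset.sum_congr rfl fun t _ => ?_
  rw [Phi, ← Finset.mul_sum, mul_div_assoc]

lemma deltaSol_expand (ε : ℝ) (f : (Fin n → F) → ℝ) :
    deltaSol L (fun y => ε * f y)
      = ∑ t ∈ (Finset.univ : Finset (Fin k)).powerset,
          (ε ^ t.card + (-ε) ^ t.card) * (1/2)^(k - t.card) * Phi L t f := by
  rw [deltaSol]
  have h1 := lambdaSol_expand L n ε f
  have h2 := lambdaSol_expand L n (-ε) f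
  have h2' : lambdaSol L (fun y => 1/2 - ε * f y)
      = ∑ t ∈ (Finset.univ : Finset (Fin k)).powerset,
          (-ε) ^ t.card * (1/2)^(k - t.card) * Phi L t f := by
    rw [← h2]
    congr 1
    funext y
    ring
  rw [h1, h2', ← Finset.sum_add_distrib]
  refine Finset.sum_congr rfl fun t _ => ?_
  ring

lemma cEven_even : Even (cEven L) := by
  unfold cEven
  split
  · assumption
  · exact Nat.even_add_one.2 (by assumption)

lemma sMin_le_cEven : sMin L ≤ cEven L := by
  unfold cEven
  split <;> omega

lemma sMin_mem (hL : RowsIndep L) (hm : 1 ≤ m) :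
    sMin L ∈ {s | ∃ c : Fin k → F, c ≠ 0 ∧ InducedEq L c ∧ eqLength c = s} := by
  apply Nat.sInf_mem
  refine ⟨eqLength (fun j => L ⟨0, hm⟩ j), fun j => L ⟨0, hm⟩ j, ?_, ?_, rfl⟩
  · exact hL.ne_zero ⟨0, hm⟩
  · exact fun x hx => hx ⟨0, hm⟩

lemma sMin_pos (hL : RowsIndep L) (hm : 1 ≤ m) : 1 ≤ sMin L := by
  obtain ⟨c, hc0, -, hlen⟩ := sMin_mem L hL hm
  rcases Nat.eq_zero_or_pos (sMin L) with h | h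
  · exfalso
    rw [h] at hlen
    apply hc0
    funext j
    by_contra hj
    have : j ∈ Finset.univ.filter fun j => c j ≠ 0 := Finset.mem_filter.2 ⟨Finset.mem_univ _, hj⟩
    rw [Finset.card_eq_zero.1 hlen] at this
    exact absurd this (Finset.notMem_empty j)
  · exact h

/-- If a nonempty even-sized non-critical set has size at most `c(L)`, then no nonzero
induced equation is supported on it. -/
lemma no_supported_eq (t : Finset (Fin k)) (ht2 : Even t.card) (htc : t.card ≤ cEven L)
    (hncrit : ¬ IsCriticalSet L t) :
    ∀ c : Fin k → F, (∀ j, c j ≠ 0 → j ∈ t) → InducedEq L c → c = 0 := by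
  intro c hsupp hind
  by_contra hc0
  have hmem : eqLength c ∈ {s | ∃ c : Fin k → F, c ≠ 0 ∧ InducedEq L c ∧ eqLength c = s} :=
    ⟨c, hc0, hind, rfl⟩
  have hs_le : sMin L ≤ eqLength c := Nat.sInf_le hmem
  have hlen_le : eqLength c ≤ t.card := by
    refine Finset.card_le_card fun j hj => ?_
    exact hsupp j (Finset.mem_filter.1 hj).2
  -- so sMin L ≤ t.card ≤ cEven L
  have hcard : t.card = cEven L := by
    have h2 : sMin L ≤ t.card := le_trans hs_le hlen_le
    obtain ⟨a, ha⟩ := ht2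
    unfold cEven at htc ⊢
    by_cases hE : Even (sMin L)
    · rw [if_pos hE] at htc ⊢; omega
    · rw [if_neg hE] at htc ⊢
      obtain ⟨r, hr⟩ := Nat.not_even_iff_odd.1 hE
      omega
  -- t is critical, contradiction
  apply hncrit
  refine ⟨hcard, 1, ?_⟩
  obtain ⟨j0, hj0⟩ : ∃ j, c j ≠ 0 := by
    by_contra h
    push_neg at h
    exact hc0 (funext fun j => h j)
  have hj0t : j0 ∈ t := hsupp j0 hj0
  set e := t.orderIsoOfFin rfl with he
  refine ⟨fun _ s => c (e s), ?_, ?_, ?_⟩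
  · omega
  · -- single nonzero row is independent
    have hrow : (fun s => c (e s)) ≠ 0 := by
      intro h
      apply hj0
      have h1 : c (e (e.symm ⟨j0, hj0t⟩)) = 0 := congrFun h (e.symm ⟨j0, hj0t⟩)
      rwa [OrderIso.apply_symm_apply] at h1
    have : LinearIndependent F (fun _ : Fin 1 => fun s => c (e s)) :=
      linearIndependent_unique_iff.2 hrow
    exact this
  · intro x hx r
    have h2 : ∑ j, c j * x j = ∑ j ∈ t, c j * x j := by
      refine (Finset.sum_subset (Finset.subset_univ t) ?_).symm
      intro j _ hj
      have : c j = 0 := by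
        by_contra h
        exact hj (hsupp j h)
      simp [this]
    have h3 := hind x hx
    rw [h2, sum_S t (fun j => c j * x j)] at h3
    exact h3

end Helpers


/-- if there is a balanced `f : F_q^n → [−1/2, 1/2]` with
`Σ_{B ∈ 𝒞(L)} Λ_{L_B}(f) < 0`, then `L` is uncommon. Here, for each critical set `B`,
`LB B` is (a representative of) the critical system `L_B` induced by `L` on `B`. -/
theorem uncommon_of_critical_sum_neg
    {F : Type} [Field F] [Fintype F] [DecidableEq F]
    {m k : ℕ} (hm : 2 ≤ m) (hmk : m < k)
    (L : Matrix (Fin m) (Fin k) F) (hL : RowsIndep L)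
    (LB : (B : Finset (Fin k)) → Matrix (Fin (mMax L B)) (Fin B.card) F)
    (hLB : ∀ B : Finset (Fin k), IsCriticalSet L B →
      RowsIndep (LB B) ∧ InducesOn L (LB B) B rfl)
    (n : ℕ) (hn : 1 ≤ n) (f : (Fin n → F) → ℝ)
    (hf : ∀ y, f y ∈ Set.Icc (-(1 / 2) : ℝ) (1 / 2))
    (hbal : ∑ y : Fin n → F, f y = 0)
    (hneg : ∑ᶠ B ∈ {B : Finset (Fin k) | IsCriticalSet L B}, lambdaSol (LB B) f < 0) :
    ¬ IsCommon L := by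
  intro hcommon
  classical
  set c := cEven L with hc
  have hset : {B : Finset (Fin k) | IsCriticalSet L B}
      = ↑((Finset.univ : Finset (Finset (Fin k))).filter fun B => IsCriticalSet L B) := by
    ext B; simp
  rw [hset, finsum_mem_coe_finset] at hneg
  set A := ∑ B ∈ (Finset.univ : Finset (Finset (Fin k))).filter
    (fun B => IsCriticalSet L B), lambdaSol (LB B) f with hA
  have hm1 : 1 ≤ m := by omega
  have hs1 : 1 ≤ sMin L := sMin_pos L hL hm1
  have hc1 : 1 ≤ c := le_trans hs1 (sMin_le_cEven L)
  have hceven : Even c := cEven_even L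
  have habs : ∀ y, |f y| ≤ 1/2 := fun y => abs_le.2 ⟨by simpa using (hf y).1, (hf y).2⟩
  set δ : ℝ := (1/2)^(k - c) * (-A) with hδ
  have hδpos : 0 < δ := mul_pos (pow_pos (by norm_num) _) (neg_pos.2 hneg)
  set ε : ℝ := min 1 δ / 2 with hε
  have hεpos : 0 < ε := div_pos (lt_min one_pos hδpos) two_pos
  have hε1 : ε ≤ 1 := by
    have h1 : min 1 δ ≤ 1 := min_le_left _ _
    rw [hε]; linarith
  have hε2 : ε^2 < δ := by
    have h1 : min 1 δ ≤ 1 := min_le_left _ _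
    have h2 : min 1 δ ≤ δ := min_le_right _ _
    have h3 : 0 < min 1 δ := lt_min one_pos hδpos
    have h4 : ε^2 = (min 1 δ)^2/4 := by rw [hε]; ring
    nlinarith
  set f' : (Fin n → F) → ℝ := fun y => ε * f y with hf'
  have hf'mem : ∀ y, f' y ∈ Set.Icc (-(1/2):ℝ) (1/2) := by
    intro y
    have habs' : |f' y| ≤ 1/2 := by
      rw [hf']
      simp only []
      rw [abs_mul, abs_of_pos hεpos]
      calc ε * |f y| ≤ 1 * (1/2) :=
            mul_le_mul hε1 (habs y) (abs_nonneg _) one_pos.le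
        _ = 1/2 := one_mul _
    have := abs_le.1 habs'
    exact Set.mem_Icc.2 ⟨by linarith [this.1], this.2⟩
  have hcomm := hcommon n hn f' hf'mem
  -- expansion
  set P := (Finset.univ : Finset (Fin k)).powerset with hP
  set w : Finset (Fin k) → ℝ :=
    fun t => (ε ^ t.card + (-ε) ^ t.card) * (1/2)^(k - t.card) * Phi L t f with hw
  have hexp : deltaSol L f' = ∑ t ∈ P, w t := deltaSol_expand L n ε f
  -- termwise split
  have hterm : ∀ t ∈ P, w t = (if IsCriticalSet L t then w t else 0)
      + ((if t = ∅ then w t else 0)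
      + (if ¬ IsCriticalSet L t ∧ Even t.card ∧ c < t.card then w t else 0)) := by
    intro t _
    by_cases h1 : IsCriticalSet L t
    · have hne : t ≠ ∅ := by
        intro h
        have h2 := h1.1
        rw [h, Finset.card_empty] at h2
        omega
      rw [if_pos h1, if_neg hne, if_neg (by tauto)]; ring
    · rw [if_neg h1]
      by_cases h2 : t = ∅
      · have hn3 : ¬ (¬ IsCriticalSet L t ∧ Even t.card ∧ c < t.card) := by
          rintro ⟨-, -, h4⟩
          rw [h2, Finset.card_empty] at h4
          omega
        rw [if_pos h2, if_neg hn3]; ring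
      · rw [if_neg h2]
        by_cases h3 : Even t.card
        · by_cases h4 : c < t.card
          · rw [if_pos ⟨h1, h3, h4⟩]; ring
          · rw [if_neg (by tauto)]
            have hΦ : Phi L t f = 0 :=
              Phi_eq_zero_of_no_eq L t n (Finset.nonempty_iff_ne_empty.2 h2)
                (no_supported_eq L t h3 (not_lt.1 h4) h1) f hbal
            rw [hw]
            simp only [hΦ, mul_zero, add_zero]
        · rw [if_neg (by tauto)]
          have hodd : (-ε) ^ t.card = -(ε ^ t.card) :=
            Odd.neg_pow (Nat.not_even_iff_odd.1 h3) ε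
          rw [hw]
          simp only [hodd, add_neg_cancel, zero_mul, add_zero]
  have hsplit : ∑ t ∈ P, w t
      = (∑ t ∈ P, if IsCriticalSet L t then w t else 0)
      + ((∑ t ∈ P, if t = ∅ then w t else 0)
      + (∑ t ∈ P, if ¬ IsCriticalSet L t ∧ Even t.card ∧ c < t.card then w t else 0)) := by
    rw [← Finset.sum_add_distrib, ← Finset.sum_add_distrib]
    exact Finset.sum_congr rfl hterm
  -- the empty-set term
  have hempty : (∑ t ∈ P, if t = ∅ then w t else 0) = 2 * (1/2)^k := by
    rw [Finset.sum_ite_eq' P (∅ : Finset (Fin k)) w]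
    rw [if_pos (Finset.empty_mem_powerset _)]
    rw [hw]
    simp only [Finset.card_empty, pow_zero, Nat.sub_zero]
    rw [Phi_empty]
    ring
  -- the critical term
  have hPuniv : P = (Finset.univ : Finset (Finset (Fin k))) := by
    ext t; simp [hP]
  have hcrit : (∑ t ∈ P, if IsCriticalSet L t then w t else 0)
      = 2 * ε^c * (1/2)^(k - c) * A := by
    rw [← Finset.sum_filter, hPuniv, hA, Finset.mul_sum]
    refine Finset.sum_congr rfl fun t ht => ?_
    have h1 : IsCriticalSet L t := (Finset.mem_filter.1 ht).2
    have hcard : t.card = c := h1.1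
    have hΦ : Phi L t f = lambdaSol (LB t) f :=
      Phi_eq_lambda L t n (LB t) (hLB t h1).1 (hLB t h1).2 f
    rw [hw]
    simp only [hcard, hΦ, hceven.neg_pow]
    ring
  -- bound on the remainder
  have hrem : (∑ t ∈ P, if ¬ IsCriticalSet L t ∧ Even t.card ∧ c < t.card then w t else 0)
      ≤ 2 * ε^(c+2) := by
    have hbnd : ∀ t ∈ P,
        (if ¬ IsCriticalSet L t ∧ Even t.card ∧ c < t.card then w t else 0)
          ≤ 2 * (1/2)^k * ε^(c+2) := by
      intro t ht
      split
      · next h =>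
        obtain ⟨-, h3, h4⟩ := h
        have hck : t.card ≤ k := by
          have := Finset.card_le_univ t
          simpa using this
        have hc2 : c + 2 ≤ t.card := by
          obtain ⟨a, ha⟩ := hceven
          obtain ⟨b, hb⟩ := h3
          omega
        have h5 : |w t| ≤ 2 * (1/2)^k * ε^(c+2) := by
          rw [hw]
          simp only []
          rw [abs_mul, abs_mul]
          have e1 : |ε ^ t.card + (-ε) ^ t.card| ≤ 2 * ε^t.card := by
            calc |ε ^ t.card + (-ε) ^ t.card| ≤ |ε ^ t.card| + |(-ε) ^ t.card| :=
                  abs_add_le _ _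
              _ = 2 * ε^t.card := by
                  rw [abs_pow, abs_pow, abs_neg, abs_of_pos hεpos]; ring
          have e2 : |((1:ℝ)/2)^(k - t.card)| = (1/2)^(k-t.card) :=
            abs_of_pos (pow_pos (by norm_num) _)
          have e3 : |Phi L t f| ≤ (1/2)^t.card := Phi_abs_le L t n f habs
          have e4 : ε^t.card ≤ ε^(c+2) :=
            pow_le_pow_of_le_one hεpos.le hε1 hc2
          calc |ε ^ t.card + (-ε) ^ t.card| * |((1:ℝ)/2)^(k - t.card)| * |Phi L t f|
              ≤ (2 * ε^t.card) * ((1/2)^(k-t.card)) * ((1/2)^t.card) := by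
                rw [e2]
                refine mul_le_mul (mul_le_mul e1 le_rfl (by positivity) (by positivity)) e3
                  (abs_nonneg _) (by positivity)
            _ = 2 * ε^t.card * (1/2)^k := by
                rw [mul_assoc, ← pow_add, Nat.sub_add_cancel hck]
            _ ≤ 2 * ε^(c+2) * (1/2)^k := by
                have := mul_le_mul_of_nonneg_left e4 (by norm_num : (0:ℝ) ≤ 2)
                nlinarith [pow_pos (show (0:ℝ) < 1/2 by norm_num) k]
            _ = 2 * (1/2)^k * ε^(c+2) := by ring
        exact le_trans (le_abs_self _) h5
      · positivity
    calc (∑ t ∈ P, if ¬ IsCriticalSet L t ∧ Even t.card ∧ c < t.card then w t else 0)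
        ≤ ∑ _t ∈ P, 2 * (1/2:ℝ)^k * ε^(c+2) := Finset.sum_le_sum hbnd
      _ = P.card * (2 * (1/2)^k * ε^(c+2)) := by
          rw [Finset.sum_const, nsmul_eq_mul]
      _ = 2 * ε^(c+2) := by
          have : (P.card : ℝ) = 2^k := by
            rw [hP, Finset.card_powerset]
            simp
          rw [this]
          have h2k : (2:ℝ)^k * (1/2)^k = 1 := by
            rw [← mul_pow]; norm_num
          linear_combination (2*ε^(c+2)) * h2k
  -- put it together
  have hδA : 2 * ε^c * (1/2)^(k - c) * A = -(2 * ε^c * δ) := by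
    rw [hδ]; ring
  have hfinal : deltaSol L f' < 2 * (1/2)^k := by
    rw [hexp, hsplit, hempty, hcrit]
    have h1 : 2 * ε^(c+2) < 2 * ε^c * δ := by
      have : ε^(c+2) = ε^c * ε^2 := by ring
      rw [this]
      have hεc : 0 < ε^c := pow_pos hεpos c
      nlinarith
    rw [hδA]
    linarith [hrem]
  have h2k : (2:ℝ)^(1-(k:ℤ)) = 2 * (1/2)^k := by
    rw [zpow_sub₀ (two_ne_zero), zpow_one, zpow_natCast, one_div, inv_pow, div_eq_mul_inv]
  rw [h2k] at hcomm
  linarith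
end

section
/- Let q be a prime power, let m ≤ k be positive integers, let L be an (m×k)-system over F_q, let n ≥ 1, and let f : F_q^n → ℝ be a balanced function. If B ⊆ {1,…,k} is a nonempty set that is not rank-reducing for L, then Φ_L(B, f) = 0. -/
open Finset

/-- if `B` is a nonempty set that is not rank-reducing for `L` and `f`
is balanced, then `Φ_L(B, f) = 0`. -/
theorem phi_eq_zero_of_not_rankReducing
    {F : Type} [Field F] [Fintype F] [DecidableEq F]
    {m k : ℕ} (hm : 1 ≤ m) (hmk : m ≤ k)
    (L : Matrix (Fin m) (Fin k) F) (hL : RowsIndep L)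
    (n : ℕ) (hn : 1 ≤ n) (f : (Fin n → F) → ℝ)
    (hbal : ∑ y : Fin n → F, f y = 0)
    (B : Finset (Fin k)) (hBne : B.Nonempty) (hB : ¬ RankReducing L B) :
    Phi L B f = 0 := by
  classical
  set L₂ : Matrix (Fin m) {j : Fin k // j ∉ B} F :=
    L.submatrix id fun j : {j : Fin k // j ∉ B} => (j : Fin k) with hL₂
  -- rank facts
  have hLrank : L.rank = m := by
    have := (hL : LinearIndependent F fun i => fun j => L i j).rank_matrix
    simpa using this
  have hrank2 : L₂.rank = m := by
    have h1 : L₂.rank ≤ m := le_trans (Matrix.rank_le_card_height L₂) (by simp)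
    have h2 : L.rank ≤ L₂.rank := not_lt.mp hB
    omega
  have hsurj : Function.Surjective L₂.mulVecLin := by
    rw [← LinearMap.range_eq_top]
    apply Submodule.eq_top_of_finrank_eq
    rw [Module.finrank_pi]
    simpa [Matrix.rank] using hrank2
  -- existence of a solution with prescribed values on B
  have hext : ∀ g : (↥B → Fin n → F), ∃ x ∈ solutions L n,
      ∀ j : ↥B, x (j : Fin k) = g j := by
    intro g
    set v : Fin m → Fin n → F := fun i => ∑ j : ↥B, L i (j : Fin k) • g j with hv
    have hz : ∀ t : Fin n, ∃ z : {j : Fin k // j ∉ B} → F,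
        L₂.mulVec z = fun i => -(v i t) := fun t => hsurj _
    choose z hzz using hz
    refine ⟨fun j => if hj : j ∈ B then g ⟨j, hj⟩ else fun t => z t ⟨j, hj⟩, ?_, ?_⟩
    · simp only [solutions, Finset.mem_filter, Finset.mem_univ, true_and]
      intro i
      funext t
      have hsplit :
          (∑ j, L i j • (if hj : j ∈ B then g ⟨j, hj⟩ else fun t => z t ⟨j, hj⟩)) t
            = ∑ j, L i j * (if hj : j ∈ B then g ⟨j, hj⟩ t else z t ⟨j, hj⟩) := by
        rw [Finset.sum_apply]
        refine Finset.sum_congr rfl fun j _ => ?_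
        by_cases hj : j ∈ B <;> simp [hj]
      rw [hsplit]
      rw [← Finset.sum_filter_add_sum_filter_not Finset.univ (· ∈ B)]
      have e1 : ∑ j ∈ Finset.univ.filter (· ∈ B),
          L i j * (if hj : j ∈ B then g ⟨j, hj⟩ t else z t ⟨j, hj⟩) = v i t := by
        rw [hv]
        rw [Finset.sum_subtype (p := (· ∈ B)) (Finset.univ.filter (· ∈ B))
          (by simp) (fun j => L i j * (if hj : j ∈ B then g ⟨j, hj⟩ t else z t ⟨j, hj⟩))]
        simp only [Finset.sum_apply]
        refine Finset.sum_congr rfl fun j _ => ?_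
        simp [j.2]
      have e2 : ∑ j ∈ Finset.univ.filter (¬ · ∈ B),
          L i j * (if hj : j ∈ B then g ⟨j, hj⟩ t else z t ⟨j, hj⟩) = -(v i t) := by
        rw [Finset.sum_subtype (p := (· ∉ B)) (Finset.univ.filter (¬ · ∈ B))
          (by simp) (fun j => L i j * (if hj : j ∈ B then g ⟨j, hj⟩ t else z t ⟨j, hj⟩))]
        have := congrFun (hzz t) i
        rw [← this]
        simp only [Matrix.mulVec, dotProduct]
        refine Finset.sum_congr rfl fun j _ => ?_
        simp [hL₂, Matrix.submatrix, j.2]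
      rw [e1, e2]
      simp
    · intro j; simp [j.2]
  -- the fibers of the restriction map all have the same cardinality
  set r : (Fin k → Fin n → F) → (↥B → Fin n → F) := fun x => fun j => x (j : Fin k) with hr
  set c : ℕ := ((solutions L n).filter (fun x => r x = 0)).card with hc
  have hsolmem : ∀ x : Fin k → Fin n → F,
      x ∈ solutions L n ↔ ∀ i, ∑ j, L i j • x j = 0 := by
    intro x; simp [solutions]
  have hcard : ∀ g : (↥B → Fin n → F),
      ((solutions L n).filter (fun x => r x = g)).card = c := by
    intro g
    obtain ⟨xg, hxg, hxgB⟩ := hext g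
    rw [hc]
    apply Finset.card_bij' (fun x _ => x - xg) (fun y _ => y + xg)
    · intro a ha
      simp only [Finset.mem_filter] at ha ⊢
      constructor
      · rw [hsolmem] at hxg ⊢
        intro i
        have h1 := (hsolmem a).mp ha.1 i
        have h2 := hxg i
        have : ∑ j, L i j • (a - xg) j = (∑ j, L i j • a j) - ∑ j, L i j • xg j := by
          rw [← Finset.sum_sub_distrib]
          exact Finset.sum_congr rfl fun j _ => by simp [smul_sub]
        rw [this, h1, h2, sub_zero]
      · funext j
        have := congrFun ha.2 j
        simp only [hr] at this ⊢
        simp [this, hxgB j]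
    · intro a ha
      simp only [Finset.mem_filter] at ha ⊢
      constructor
      · rw [hsolmem] at hxg ⊢
        intro i
        have h1 := (hsolmem a).mp ha.1 i
        have h2 := hxg i
        have : ∑ j, L i j • (a + xg) j = (∑ j, L i j • a j) + ∑ j, L i j • xg j := by
          rw [← Finset.sum_add_distrib]
          exact Finset.sum_congr rfl fun j _ => by simp [smul_add]
        rw [this, h1, h2, add_zero]
      · funext j
        have := congrFun ha.2 j
        simp only [hr, Pi.zero_apply] at this ⊢
        simp [this, hxgB j]
    · intro a _; simp
    · intro a _; simp
  -- main computation
  have hnum : ∑ x ∈ solutions L n, ∏ j ∈ B, f (x j) = 0 := by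
    rw [← Finset.sum_fiberwise (solutions L n) r (fun x => ∏ j ∈ B, f (x j))]
    have hinner : ∀ g : (↥B → Fin n → F),
        ∑ x ∈ (solutions L n).filter (fun x => r x = g), ∏ j ∈ B, f (x j)
          = (c : ℝ) * ∏ j : ↥B, f (g j) := by
      intro g
      have : ∀ x ∈ (solutions L n).filter (fun x => r x = g),
          ∏ j ∈ B, f (x j) = ∏ j : ↥B, f (g j) := by
        intro x hx
        rw [Finset.mem_filter] at hx
        rw [← Finset.prod_coe_sort B (fun j => f (x j))]
        refine Finset.prod_congr rfl fun j _ => ?_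
        rw [← congrFun hx.2 j]
      rw [Finset.sum_congr rfl this, Finset.sum_const, hcard g, nsmul_eq_mul]
    rw [Finset.sum_congr rfl (fun g _ => hinner g), ← Finset.mul_sum]
    have hgsum : ∑ g : (↥B → Fin n → F), ∏ j : ↥B, f (g j) = 0 := by
      have := Finset.prod_univ_sum (fun _ : ↥B => (Finset.univ : Finset (Fin n → F)))
        (fun (_ : ↥B) (y : Fin n → F) => f y)
      rw [Fintype.piFinset_univ] at this
      rw [← this]
      obtain ⟨j0, hj0⟩ := hBne
      exact Finset.prod_eq_zero (Finset.mem_univ (⟨j0, hj0⟩ : ↥B)) hbal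
    rw [hgsum, mul_zero]
  rw [Phi, hnum, zero_div]
end

section
/- Let q be a prime power, let 2 ≤ m ≤ k be integers, let L be an (m×k)-system over F_q, let n ≥ 1, and let f : F_q^n → ℝ be a balanced function. If B is a critical set for L, then Φ_L(B, f) = Λ_{L_B}(f). -/
open Finset

section AuxProof

set_option maxHeartbeats 1000000

open Module Matrix

variable {F : Type} [Field F] [Fintype F] [DecidableEq F]

/-- Evaluation of a dual functional on the standard basis vectors. -/
noncomputable def evMap (c : ℕ) : Module.Dual F (Fin c → F) →ₗ[F] (Fin c → F) :=
  LinearMap.pi fun t => LinearMap.applyₗ (Pi.single t 1)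

@[simp] lemma evMap_apply {c : ℕ} (φ : Module.Dual F (Fin c → F)) (t : Fin c) :
    evMap c φ t = φ (Pi.single t 1) := rfl

lemma dual_eval {c : ℕ} (φ : Module.Dual F (Fin c → F)) (w : Fin c → F) :
    φ w = ∑ t, w t * φ (Pi.single t 1) := by
  conv_lhs => rw [← Finset.univ_sum_single w]
  rw [map_sum]
  refine Finset.sum_congr rfl fun t _ => ?_
  have h : Pi.single t (w t) = w t • (Pi.single t 1 : Fin c → F) := by
    ext s
    by_cases h : t = s <;> simp [Pi.single_apply, h]
  rw [h, _root_.map_smul, smul_eq_mul]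

lemma evMap_injective (c : ℕ) : Function.Injective (evMap (F := F) c) := by
  intro φ ψ h
  refine LinearMap.ext fun w => ?_
  rw [dual_eval φ w, dual_eval ψ w]
  refine Finset.sum_congr rfl fun t _ => ?_
  rw [show φ (Pi.single t 1) = ψ (Pi.single t 1) by
    have := congrFun h t; simpa using this]

/-- Generic fiber-counting lemma for sums along a surjective additive map. -/
lemma sum_comp_count {V W : Type} [AddCommGroup V] [AddCommGroup W]
    [DecidableEq V] [DecidableEq W]
    (S : Finset V) (T : Finset W) (P : V →+ W)
    (hmaps : ∀ x ∈ S, P x ∈ T)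
    (hsub : ∀ x ∈ S, ∀ y ∈ S, x - y ∈ S)
    (h0S : (0 : V) ∈ S)
    (hsurj : ∀ y ∈ T, ∃ x ∈ S, P x = y)
    (g : W → ℝ) :
    ∃ K : ℕ, 0 < K ∧ (∑ x ∈ S, g (P x)) = K * ∑ y ∈ T, g y ∧ S.card = K * T.card := by
  classical
  set K := (S.filter fun x => P x = 0).card with hKdef
  have hKpos : 0 < K :=
    Finset.card_pos.mpr ⟨0, Finset.mem_filter.mpr ⟨h0S, map_zero P⟩⟩
  have hfiber : ∀ y ∈ T, (S.filter fun x => P x = y).card = K := by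
    intro y hy
    obtain ⟨x₀, hx₀S, hx₀⟩ := hsurj y hy
    rw [hKdef]
    apply Finset.card_bij' (fun x _ => x - x₀) (fun x _ => x + x₀)
    · intro a ha
      rcases Finset.mem_filter.mp ha with ⟨haS, haP⟩
      exact Finset.mem_filter.mpr ⟨hsub a haS x₀ hx₀S,
        by rw [map_sub, haP, hx₀, sub_self]⟩
    · intro a ha
      rcases Finset.mem_filter.mp ha with ⟨haS, haP⟩
      have hnx₀ : -x₀ ∈ S := by simpa using hsub 0 h0S x₀ hx₀S
      have hrw : a + x₀ = a - (-x₀) := by rw [sub_neg_eq_add]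
      refine Finset.mem_filter.mpr ⟨?_, by rw [map_add, haP, hx₀, zero_add]⟩
      rw [hrw]
      exact hsub a haS _ hnx₀
    · intro a _; simp
    · intro a _; simp
  refine ⟨K, hKpos, ?_, ?_⟩
  · rw [← Finset.sum_fiberwise_of_maps_to hmaps (fun x => g (P x))]
    rw [Finset.mul_sum]
    refine Finset.sum_congr rfl fun y hy => ?_
    have hcg : ∀ x ∈ S.filter fun x => P x = y, g (P x) = g y := fun x hx => by
      rw [(Finset.mem_filter.mp hx).2]
    rw [Finset.sum_congr rfl hcg, Finset.sum_const, hfiber y hy, nsmul_eq_mul]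
  · rw [Finset.card_eq_sum_card_fiberwise hmaps]
    rw [Finset.sum_congr rfl hfiber, Finset.sum_const, smul_eq_mul, mul_comm]

/-- The key linear-algebra fact: since `LB` is a *maximal* induced system on `B`,
the solution space of `LB` (over `F`) is exactly the projection of the solution
space of `L` onto the coordinates in `B`. -/
lemma ker_eq_map {m k : ℕ} (L : Matrix (Fin m) (Fin k) F) (B : Finset (Fin k))
    (LB : Matrix (Fin (mMax L B)) (Fin B.card) F)
    (hLB : RowsIndep LB) (hLB' : InducesOn L LB B rfl) :
    LinearMap.ker LB.mulVecLin =
      Submodule.map (LinearMap.funLeft F F fun t => ((B.orderIsoOfFin rfl t : Fin k)))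
        (LinearMap.ker L.mulVecLin) := by
  classical
  set p : (Fin k → F) →ₗ[F] (Fin B.card → F) :=
    LinearMap.funLeft F F fun t => ((B.orderIsoOfFin rfl t : Fin k)) with hp
  set Wsub : Submodule F (Fin B.card → F) :=
    Submodule.map p (LinearMap.ker L.mulVecLin) with hW
  have hkerL : ∀ x : Fin k → F, x ∈ LinearMap.ker L.mulVecLin ↔
      ∀ i, ∑ j, L i j * x j = 0 := by
    intro x
    rw [LinearMap.mem_ker]
    constructor
    · intro h i
      have := congrFun h i
      simpa [Matrix.mulVecLin_apply, Matrix.mulVec, dotProduct] using this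
    · intro h
      funext i
      simpa [Matrix.mulVecLin_apply, Matrix.mulVec, dotProduct] using h i
  -- W ≤ ker LB
  have hle : Wsub ≤ LinearMap.ker LB.mulVecLin := by
    rintro w ⟨x, hx, rfl⟩
    rw [LinearMap.mem_ker]
    funext r
    have := hLB' x ((hkerL x).mp hx) r
    simpa [Matrix.mulVecLin_apply, Matrix.mulVec, dotProduct, hp,
      LinearMap.funLeft_apply] using this
  set A := Wsub.dualAnnihilator with hA
  haveI : Module.Free F A := Module.Free.of_divisionRing F A
  haveI : Module.Finite F A := by infer_instance
  -- mMax ≤ finrank A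
  have h1 : mMax L B ≤ finrank F A := by
    set φ : Fin (mMax L B) → Module.Dual F (Fin B.card → F) :=
      fun i => (LinearMap.proj i).comp LB.mulVecLin with hφ
    have hmem : ∀ i, φ i ∈ A := by
      intro i
      rw [hA, Submodule.mem_dualAnnihilator]
      intro w hw
      have := hle hw
      rw [LinearMap.mem_ker] at this
      simp [hφ, this]
    have hφind : LinearIndependent F φ := by
      have hcomp : (fun i => evMap (F := F) B.card (φ i)) = fun i => fun j => LB i j := by
        funext i t
        simp [hφ, Matrix.mulVecLin_apply, Matrix.mulVec, dotProduct,
          Pi.single_apply, mul_ite, Finset.sum_ite_eq']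
      have : LinearIndependent F (fun i => evMap (F := F) B.card (φ i)) := by
        rw [hcomp]; exact hLB
      exact this.of_comp (evMap (F := F) B.card)
    have hspan : Submodule.span F (Set.range φ) ≤ A :=
      Submodule.span_le.mpr (Set.range_subset_iff.mpr hmem)
    have hcard := finrank_span_eq_card hφind
    have hmono := Submodule.finrank_mono hspan
    rw [hcard] at hmono
    simpa using hmono
  -- finrank A ≤ mMax
  have h2 : finrank F A ≤ mMax L B := by
    have hbdd : BddAbove {m' | ∃ L' : Matrix (Fin m') (Fin B.card) F,
        RowsIndep L' ∧ InducesOn L L' B rfl} := by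
      refine ⟨B.card, fun m' hm' => ?_⟩
      obtain ⟨L', hInd, -⟩ := hm'
      have := hInd.fintype_card_le_finrank
      simpa [Module.finrank_fin_fun] using this
    set bA := Module.finBasis F A with hbA
    set Mx : Matrix (Fin (finrank F A)) (Fin B.card) F :=
      fun i t => ((bA i : Module.Dual F (Fin B.card → F)) (Pi.single t 1)) with hMx
    have hMind : RowsIndep Mx := by
      have hb1 : LinearIndependent F (fun i => ((bA i : Module.Dual F (Fin B.card → F)))) :=
        bA.linearIndependent.map_injOn A.subtype (Set.injOn_of_injective A.injective_subtype)
      have hb2 := hb1.map' (evMap (F := F) B.card)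
        (LinearMap.ker_eq_bot.mpr (evMap_injective B.card))
      have : (fun i => fun j => Mx i j)
          = (evMap (F := F) B.card) ∘ fun i => ((bA i : Module.Dual F (Fin B.card → F))) := by
        funext i t
        simp [hMx]
      rw [RowsIndep, this]
      exact hb2
    have hMind' : InducesOn L Mx B rfl := by
      intro x hx r
      have hpx : p x ∈ Wsub := ⟨x, (hkerL x).mpr hx, rfl⟩
      have h0 : (bA r : Module.Dual F (Fin B.card → F)) (p x) = 0 := by
        have hmem2 : (bA r : Module.Dual F (Fin B.card → F)) ∈ Wsub.dualAnnihilator :=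
          (bA r).2
        exact (Submodule.mem_dualAnnihilator _).mp hmem2 (p x) hpx
      calc ∑ t, Mx r t * x ((B.orderIsoOfFin rfl t : Fin k))
          = ∑ t, (p x) t * (bA r : Module.Dual F (Fin B.card → F)) (Pi.single t 1) := by
            refine Finset.sum_congr rfl fun t _ => ?_
            rw [mul_comm]
            simp [hMx, hp, LinearMap.funLeft_apply]
        _ = (bA r : Module.Dual F (Fin B.card → F)) (p x) := (dual_eval _ _).symm
        _ = 0 := h0
    exact le_csSup hbdd ⟨Mx, hMind, hMind'⟩
  have hd : finrank F A = mMax L B := le_antisymm h2 h1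
  -- dimension count
  have hrank1 : finrank F Wsub + finrank F A = B.card := by
    have e : finrank F ((Fin B.card → F) ⧸ Wsub) = finrank F A :=
      LinearEquiv.finrank_eq (Subspace.quotEquivAnnihilator Wsub)
    have q := Submodule.finrank_quotient_add_finrank Wsub
    have hfr : finrank F (Fin B.card → F) = B.card := Module.finrank_fin_fun F
    omega
  have hrankLB : finrank F (LinearMap.range LB.mulVecLin) = mMax L B := by
    have h3 : Matrix.rank LB = mMax L B := by
      have htr : Matrix.rank LB.transpose = mMax L B := by
        have hinj : Function.Injective (Matrix.mulVec LB.transpose) := by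
          rw [Matrix.mulVec_injective_iff]
          simpa [Matrix.transpose_transpose] using (show LinearIndependent F LB.row from hLB)
        have hker : LinearMap.ker (Matrix.mulVecLin LB.transpose) = ⊥ := by
          rw [LinearMap.ker_eq_bot]
          exact hinj
        have := LinearMap.finrank_range_add_finrank_ker (Matrix.mulVecLin LB.transpose)
        rw [hker] at this
        simp only [finrank_bot, add_zero, Module.finrank_fin_fun] at this
        exact this
      rw [← Matrix.rank_transpose]
      exact htr
    exact h3
  have hker2 := LinearMap.finrank_range_add_finrank_ker LB.mulVecLin
  rw [hrankLB, Module.finrank_fin_fun] at hker2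
  have hfinal : finrank F Wsub = finrank F (LinearMap.ker LB.mulVecLin) := by omega
  exact (Submodule.eq_of_le_of_finrank_eq hle hfinal).symm

end AuxProof

/-- if `B` is a critical set for `L` and `f` is balanced, then
`Φ_L(B, f) = Λ_{L_B}(f)`, where `LB` is (a representative of) the critical
system induced by `L` on `B`. -/
theorem phi_eq_lambda_of_critical
    {F : Type} [Field F] [Fintype F] [DecidableEq F]
    {m k : ℕ} (hm : 2 ≤ m) (hmk : m ≤ k)
    (L : Matrix (Fin m) (Fin k) F) (hL : RowsIndep L)
    (n : ℕ) (hn : 1 ≤ n) (f : (Fin n → F) → ℝ)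
    (hbal : ∑ y : Fin n → F, f y = 0)
    (B : Finset (Fin k)) (hB : IsCriticalSet L B)
    (LB : Matrix (Fin (mMax L B)) (Fin B.card) F)
    (hLB : RowsIndep LB) (hLB' : InducesOn L LB B rfl) :
    Phi L B f = lambdaSol LB f := by
  classical
  set ι : Fin B.card → Fin k := fun t => ((B.orderIsoOfFin rfl t : Fin k)) with hι
  set P : (Fin k → Fin n → F) →+ (Fin B.card → Fin n → F) :=
    { toFun := fun x => fun t => x (ι t)
      map_zero' := rfl
      map_add' := fun a b => rfl } with hP
  have hkey := ker_eq_map L B LB hLB hLB'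
  set p : (Fin k → F) →ₗ[F] (Fin B.card → F) :=
    LinearMap.funLeft F F fun t => ((B.orderIsoOfFin rfl t : Fin k)) with hp
  -- membership characterizations
  have hmemL : ∀ x : Fin k → Fin n → F, x ∈ solutions L n ↔
      ∀ τ : Fin n, (fun j => x j τ) ∈ LinearMap.ker L.mulVecLin := by
    intro x
    simp only [solutions, Finset.mem_filter, Finset.mem_univ, true_and, LinearMap.mem_ker]
    constructor
    · intro h τ
      funext i
      have := congrFun (h i) τ
      simpa [Matrix.mulVecLin_apply, Matrix.mulVec, dotProduct,
        Finset.sum_apply] using this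
    · intro h i
      funext τ
      have := congrFun (h τ) i
      simpa [Matrix.mulVecLin_apply, Matrix.mulVec, dotProduct,
        Finset.sum_apply] using this
  have hmemLB : ∀ y : Fin B.card → Fin n → F, y ∈ solutions LB n ↔
      ∀ τ : Fin n, (fun t => y t τ) ∈ LinearMap.ker LB.mulVecLin := by
    intro y
    simp only [solutions, Finset.mem_filter, Finset.mem_univ, true_and, LinearMap.mem_ker]
    constructor
    · intro h τ
      funext r
      have := congrFun (h r) τ
      simpa [Matrix.mulVecLin_apply, Matrix.mulVec, dotProduct,
        Finset.sum_apply] using this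
    · intro h r
      funext τ
      have := congrFun (h τ) r
      simpa [Matrix.mulVecLin_apply, Matrix.mulVec, dotProduct,
        Finset.sum_apply] using this
  -- hypotheses of the counting lemma
  have hmaps : ∀ x ∈ solutions L n, P x ∈ solutions LB n := by
    intro x hx
    rw [hmemLB]
    intro τ
    rw [hkey]
    exact ⟨fun j => x j τ, (hmemL x).mp hx τ, rfl⟩
  have hsub : ∀ x ∈ solutions L n, ∀ y ∈ solutions L n, x - y ∈ solutions L n := by
    intro x hx y hy
    rw [hmemL] at hx hy ⊢
    intro τ
    have : (fun j => (x - y) j τ) = (fun j => x j τ) - (fun j => y j τ) := by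
      funext j; simp
    rw [this]
    exact sub_mem (hx τ) (hy τ)
  have h0S : (0 : Fin k → Fin n → F) ∈ solutions L n := by
    rw [hmemL]
    intro τ
    exact (LinearMap.ker L.mulVecLin).zero_mem
  have hsurj : ∀ y ∈ solutions LB n, ∃ x ∈ solutions L n, P x = y := by
    intro y hy
    have h1 : ∀ τ : Fin n, ∃ z : Fin k → F,
        z ∈ LinearMap.ker L.mulVecLin ∧ p z = (fun t => y t τ) := by
      intro τ
      have := (hmemLB y).mp hy τ
      rw [hkey] at this
      obtain ⟨z, hz1, hz2⟩ := this
      exact ⟨z, hz1, hz2⟩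
    choose z hz1 hz2 using h1
    refine ⟨fun j τ => z τ j, ?_, ?_⟩
    · rw [hmemL]
      intro τ
      simpa using hz1 τ
    · funext t τ
      have := congrFun (hz2 τ) t
      simpa [hp, hP, hι, LinearMap.funLeft_apply] using this
  obtain ⟨K, hK, hsum, hcard⟩ := sum_comp_count (solutions L n) (solutions LB n) P
    hmaps hsub h0S hsurj (fun y => ∏ t, f (y t))
  have hprod : ∀ x : Fin k → Fin n → F, (∏ j ∈ B, f (x j)) = ∏ t, f (P x t) := by
    intro x
    rw [← Finset.prod_coe_sort B (fun j => f (x j))]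
    exact (Equiv.prod_comp (B.orderIsoOfFin rfl).toEquiv
      (fun j => f (x (j : Fin k)))).symm
  rw [Phi, lambdaSol]
  rw [Finset.sum_congr rfl (fun x _ => hprod x), hsum, hcard, Nat.cast_mul]
  exact mul_div_mul_left _ _ (by exact_mod_cast hK.ne')
end
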